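/- Let S be a Polish space, μ a product probability measure on S^d, and B ⊆ {1,…,d} nonempty. For probability measures ν, θ on S^d with equal marginals ν^(B) = θ^(B), let ρ̃ be the probability measure on S^d × S^B defined as the semidirect product of the common marginal ν^(B) with the product of the conditional kernels of ν given coordinates in B and of θ given coordinates in B. Then H(ρ̃ | μ ⊗ μ^(B)) = H(ν^(B) | μ^(B)) + H(ν | ν^(B) ⊗ μ^(Bᶜ)) + H(θ | θ^(B) ⊗ μ^(Bᶜ)). -/

import Mathlib

open MeasureTheory ProbabilityTheory Real

-- Relative entropy (Kullback–Leibler divergence) with values in `EReal`.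
open scoped Classical in
noncomputable def KL {X : Type*} [MeasurableSpace X] (ν μ : Measure X) : EReal :=
  if ν ≪ μ ∧ Integrable (fun x => Real.log (ν.rnDeriv μ x).toReal) ν
  then ((∫ x, Real.log (ν.rnDeriv μ x).toReal ∂ν : ℝ) : EReal) else ⊤

/-- Marginal of a measure on `S^d` on the coordinates in `B`. -/
noncomputable def marg {S : Type*} [MeasurableSpace S] {d : ℕ}
    (ν : Measure (Fin d → S)) (B : Set (Fin d)) : Measure (B → S) :=
  ν.map (fun x (i : B) => x (i : Fin d))

/-- The identification `S^d ≅ S^B × S^{Bᶜ}`. -/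
def splitMap {S : Type*} {d : ℕ} (B : Set (Fin d)) :
    (Fin d → S) → ((B → S) × ((↥Bᶜ) → S)) :=
  fun x => (fun i => x (i : Fin d), fun i => x (i : Fin d))

/-! The reference measure `μ^(B) ⊗ μ^(Bᶜ) ⊗ μ^(Bᶜ)` is itself a composition product of `μ^(B)`
with the constant kernel `μ^(Bᶜ) ⊗ μ^(Bᶜ)`, so the chain rule for the Kullback–Leibler divergence
splits off `H(ν^(B) | μ^(B))` and leaves a divergence between two composition products of the
common marginal `ν^(B)` with product kernels. After reassociating `S^B × (S^(Bᶜ) × S^(Bᶜ))`, the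
chain rule applies once more and separates the two factors: in the remaining term both measures
share the kernel of the first factor, which therefore drops out. On probability measures `KL`
agrees with `klDiv`, which carries these identities. -/

open InformationTheory

lemma KL_eq_coe_klDiv {X : Type*} [MeasurableSpace X] (ν μ : Measure X)
    [IsProbabilityMeasure ν] [IsProbabilityMeasure μ] :
    KL ν μ = klDiv ν μ := by
  by_cases h : ν ≪ μ ∧ Integrable (llr ν μ) ν
  · have hnonneg := integral_llr_add_sub_measure_univ_nonneg h.1 h.2
    simp only [probReal_univ, add_sub_cancel_right] at hnonneg
    rw [KL, ← llr_def, if_pos h, klDiv_of_ac_of_integrable h.1 h.2, probReal_univ,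
      probReal_univ, add_sub_cancel_right, EReal.coe_ennreal_ofReal, max_eq_left hnonneg]
  · rw [KL, ← llr_def, if_neg h, klDiv_eq_top_iff.mpr fun hac hint => h ⟨hac, hint⟩]
    rfl

lemma InformationTheory.klDiv_map_measurableEquiv {X Y : Type*} [MeasurableSpace X]
    [MeasurableSpace Y] (μ ν : Measure X) [IsFiniteMeasure μ] [IsFiniteMeasure ν]
    (e : X ≃ᵐ Y) :
    klDiv (μ.map e) (ν.map e) = klDiv μ ν := by
  refine le_antisymm (klDiv_map_le μ ν e.measurable) ?_
  calc klDiv μ ν = klDiv ((μ.map e).map e.symm) ((ν.map e).map e.symm) := by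
        simp only [MeasurableEquiv.map_symm_map]
    _ ≤ klDiv (μ.map e) (ν.map e) := klDiv_map_le _ _ e.symm.measurable

section
variable {α β γ : Type*} [MeasurableSpace α] [MeasurableSpace β] [MeasurableSpace γ]

lemma ProbabilityTheory.Kernel.compProd_prodMkRight (κ : Kernel α β) (η : Kernel α γ)
    [IsSFiniteKernel κ] [IsSFiniteKernel η] :
    κ ⊗ₖ η.prodMkRight β = κ ×ₖ η := by
  ext a s hs
  rw [Kernel.compProd_apply hs, Kernel.prod_apply, Measure.prod_apply hs]
  rfl

lemma MeasureTheory.Measure.map_prodAssoc_symm_compProd_prod (m : Measure α)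
    (κ : Kernel α β) (η : Kernel α γ) [IsSFiniteKernel κ] [IsSFiniteKernel η] :
    (m ⊗ₘ (κ ×ₖ η)).map MeasurableEquiv.prodAssoc.symm = m ⊗ₘ κ ⊗ₘ η.prodMkRight β := by
  rw [← Kernel.compProd_prodMkRight, Measure.compProd_assoc]

lemma MeasureTheory.Measure.map_prodCongr_prodComm_compProd_prod (m : Measure α) [SFinite m]
    (κ : Kernel α β) (η : Kernel α γ) [IsSFiniteKernel κ] [IsSFiniteKernel η] :
    (m ⊗ₘ (κ ×ₖ η)).map ((MeasurableEquiv.refl α).prodCongr MeasurableEquiv.prodComm)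
      = m ⊗ₘ (η ×ₖ κ) := by
  ext s hs
  have hs' := hs.preimage ((MeasurableEquiv.refl α).prodCongr MeasurableEquiv.prodComm).measurable
  rw [Measure.map_apply (MeasurableEquiv.measurable _) hs, Measure.compProd_apply hs,
    Measure.compProd_apply hs']
  refine lintegral_congr fun a => ?_
  rw [Kernel.prod_apply, Kernel.prod_apply, ← Measure.prod_swap,
    Measure.map_apply measurable_swap (measurable_prodMk_left hs')]
  rfl

variable (m : Measure α) [IsFiniteMeasure m]

lemma InformationTheory.klDiv_compProd_prod_right (κ : Kernel α β) (η η' : Kernel α γ)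
    [IsMarkovKernel κ] [IsMarkovKernel η] [IsMarkovKernel η'] :
    klDiv (m ⊗ₘ (κ ×ₖ η)) (m ⊗ₘ (κ ×ₖ η')) = klDiv (m ⊗ₘ η) (m ⊗ₘ η') := by
  rw [← klDiv_map_measurableEquiv _ _
      ((MeasurableEquiv.refl α).prodCongr MeasurableEquiv.prodComm),
    Measure.map_prodCongr_prodComm_compProd_prod, Measure.map_prodCongr_prodComm_compProd_prod,
    ← klDiv_map_measurableEquiv _ _ MeasurableEquiv.prodAssoc.symm,
    Measure.map_prodAssoc_symm_compProd_prod, Measure.map_prodAssoc_symm_compProd_prod,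
    klDiv_compProd_left]

lemma InformationTheory.klDiv_compProd_prod_eq_add (κ κ' : Kernel α β) (η η' : Kernel α γ)
    [IsMarkovKernel κ] [IsMarkovKernel κ'] [IsMarkovKernel η] [IsMarkovKernel η'] :
    klDiv (m ⊗ₘ (κ ×ₖ η)) (m ⊗ₘ (κ' ×ₖ η'))
      = klDiv (m ⊗ₘ κ) (m ⊗ₘ κ') + klDiv (m ⊗ₘ η) (m ⊗ₘ η') := by
  rw [← klDiv_map_measurableEquiv _ _ MeasurableEquiv.prodAssoc.symm,
    Measure.map_prodAssoc_symm_compProd_prod, Measure.map_prodAssoc_symm_compProd_prod,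
    klDiv_compProd_eq_add, ← Measure.map_prodAssoc_symm_compProd_prod m κ η,
    ← Measure.map_prodAssoc_symm_compProd_prod m κ η', klDiv_map_measurableEquiv,
    klDiv_compProd_prod_right]

lemma InformationTheory.klDiv_compProd_prod_prod (μ : Measure α) [IsFiniteMeasure μ]
    (p : Measure β) (q : Measure γ) [IsProbabilityMeasure p] [IsProbabilityMeasure q]
    (κ : Kernel α β) (η : Kernel α γ) [IsMarkovKernel κ] [IsMarkovKernel η] :
    klDiv (m ⊗ₘ (κ ×ₖ η)) (μ.prod (p.prod q))
      = klDiv m μ + klDiv (m ⊗ₘ κ) (m.prod p) + klDiv (m ⊗ₘ η) (m.prod q) := by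
  rw [← Measure.compProd_const (μ := μ), ← Kernel.prod_const, klDiv_compProd_eq_add,
    klDiv_compProd_prod_eq_add, Measure.compProd_const, Measure.compProd_const, add_assoc]

end

instance isProbabilityMeasure_marg {S : Type*} [MeasurableSpace S] {d : ℕ}
    (ν : Measure (Fin d → S)) [IsProbabilityMeasure ν] (B : Set (Fin d)) :
    IsProbabilityMeasure (marg ν B) :=
  Measure.isProbabilityMeasure_map
    (measurable_pi_lambda _ fun _ => measurable_pi_apply _).aemeasurable

open ProbabilityTheory.Kernel in
theorem relativeEntropy_semidirect_product_general
    {S : Type*} [MeasurableSpace S]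
    {d : ℕ} (μs : Fin d → Measure S) [∀ i, IsProbabilityMeasure (μs i)]
    (ν θ : Measure (Fin d → S)) [IsProbabilityMeasure ν] [IsProbabilityMeasure θ]
    (B : Set (Fin d))
    (hmarg : marg ν B = marg θ B)
    (κν κθ : Kernel (B → S) ((↥Bᶜ) → S)) [IsMarkovKernel κν] [IsMarkovKernel κθ]
    (hκν : (marg ν B).compProd κν = ν.map (splitMap B))
    (hκθ : (marg θ B).compProd κθ = θ.map (splitMap B)) :
    KL ((marg ν B).compProd (κν ×ₖ κθ))
        ((marg (Measure.pi μs) B).prod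
          ((marg (Measure.pi μs) Bᶜ).prod (marg (Measure.pi μs) Bᶜ)))
      = KL (marg ν B) (marg (Measure.pi μs) B)
        + KL (ν.map (splitMap B)) ((marg ν B).prod (marg (Measure.pi μs) Bᶜ))
        + KL (θ.map (splitMap B)) ((marg θ B).prod (marg (Measure.pi μs) Bᶜ)) := by
  rw [← hκν, ← hκθ, ← hmarg]
  simp only [KL_eq_coe_klDiv, klDiv_compProd_prod_prod, EReal.coe_ennreal_add]

open ProbabilityTheory.Kernel in
/-- The semidirect product of the common marginal on `B` with the product of the
conditional kernels of `ν` and `θ` given the coordinates in `B` has relative entropy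
`H(ν^(B)|μ^(B)) + H(ν | ν^(B) ⊗ μ^(Bᶜ)) + H(θ | θ^(B) ⊗ μ^(Bᶜ))` with respect to the
corresponding product reference measure built from the product measure `μ`. -/
theorem relativeEntropy_semidirect_product
    {S : Type*} [MeasurableSpace S] [TopologicalSpace S] [PolishSpace S] [BorelSpace S]
    {d : ℕ} (μs : Fin d → Measure S) [∀ i, IsProbabilityMeasure (μs i)]
    (ν θ : Measure (Fin d → S)) [IsProbabilityMeasure ν] [IsProbabilityMeasure θ]
    (B : Set (Fin d)) (hB : B.Nonempty)
    (hmarg : marg ν B = marg θ B)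
    (κν κθ : Kernel (B → S) ((↥Bᶜ) → S)) [IsMarkovKernel κν] [IsMarkovKernel κθ]
    [SFinite (marg ν B)]
    (hκν : (marg ν B).compProd κν = ν.map (splitMap B))
    (hκθ : (marg θ B).compProd κθ = θ.map (splitMap B)) :
    KL ((marg ν B).compProd (κν ×ₖ κθ))
        ((marg (Measure.pi μs) B).prod
          ((marg (Measure.pi μs) Bᶜ).prod (marg (Measure.pi μs) Bᶜ)))
      = KL (marg ν B) (marg (Measure.pi μs) B)
        + KL (ν.map (splitMap B)) ((marg ν B).prod (marg (Measure.pi μs) Bᶜ))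
        + KL (θ.map (splitMap B)) ((marg θ B).prod (marg (Measure.pi μs) Bᶜ)) :=
  relativeEntropy_semidirect_product_general μs ν θ B hmarg κν κθ hκν hκθ
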